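/- arXiv:2010.05651 — 4 statements merged into one kernel-verified Lean document; each statement's English description precedes it below -/
import Mathlib

section
/- For primes p > 200 and q with q^{(p-5)/2} ≤ (2π)^{-p/2} p^{(p+31)/4}, one has q < √p provided p is sufficiently large (in particular for all p > 200 with q an odd prime, q ≥ 3). -/
/-!
Suppose `√p ≤ q`. With `n = (p - 5) / 2 ≥ (p - 6) / 2`, the logarithm of the left side is
`n log q ≥ (n / 2) log p ≥ ((p - 6) / 4) log p`, so the hypothesis forces
`(p / 2) log (2π) ≤ (37 / 4) log p`. This fails for `p ≥ 100`: the tangent line of `log` at `e³`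
gives `log p ≤ p / 20 + 2`, while `log (2π) > 2 log 2`.
-/

open Real

lemma log_le_mul_exp_neg_add_sub_one {x : ℝ} (hx : 0 < x) (t : ℝ) :
    log x ≤ x * exp (-t) + t - 1 := by
  have h := log_le_sub_one_of_pos (mul_pos hx (exp_pos (-t)))
  rw [log_mul hx.ne' (exp_pos _).ne', log_exp] at h
  linarith

lemma log_le_div_twenty_add_two {x : ℝ} (hx : 0 < x) : log x ≤ x / 20 + 2 := by
  have he : (20 : ℝ) ≤ exp 3 :=
    calc (20 : ℝ) ≤ 2.7182818283 ^ 3 := by norm_num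
      _ ≤ exp 1 ^ 3 := pow_le_pow_left₀ (by norm_num) exp_one_gt_d9.le 3
      _ = exp 3 := by rw [← exp_nat_mul]; norm_num
  have hinv : exp (-3) ≤ 20⁻¹ := by
    rw [exp_neg]
    exact inv_anti₀ (by norm_num) he
  have := log_le_mul_exp_neg_add_sub_one hx 3
  nlinarith [mul_le_mul_of_nonneg_left hinv hx.le]

lemma two_mul_log_two_lt_log_two_mul_pi : 2 * log 2 < log (2 * π) :=
  calc 2 * log 2 = log (2 ^ 2) := by rw [log_pow]; norm_num
    _ < log (2 * π) := log_lt_log (by norm_num) (by nlinarith [pi_gt_three])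

lemma thirtyseven_div_four_mul_log_lt {x : ℝ} (hx : 100 ≤ x) :
    37 / 4 * log x < x / 2 * log (2 * π) := by
  have := log_le_div_twenty_add_two (show 0 < x by linarith)
  nlinarith [two_mul_log_two_lt_log_two_mul_pi, log_two_gt_d9]

lemma log_rpow_mul_rpow {a x : ℝ} (ha : 0 < a) (hx : 0 < x) (u v : ℝ) :
    log (a ^ u * x ^ v) = u * log a + v * log x := by
  rw [log_mul (rpow_pos_of_pos ha u).ne' (rpow_pos_of_pos hx v).ne', log_rpow ha, log_rpow hx]

lemma div_two_mul_log_le_log_pow {x y : ℝ} (hx : 0 < x) (hxy : √x ≤ y) (n : ℕ) :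
    n / 2 * log x ≤ log (y ^ n) := by
  have hlog : log x / 2 ≤ log y := by
    rw [← log_sqrt hx.le]
    exact log_le_log (sqrt_pos.2 hx) hxy
  rw [log_pow]
  nlinarith [n.cast_nonneg (α := ℝ)]

theorem q_lt_sqrt_p_general (p q : ℕ)
    (hp200 : 200 < p)
    (h : (q : ℝ) ^ ((p - 5) / 2) ≤
      Real.rpow (2 * Real.pi) (-(p : ℝ) / 2) * Real.rpow (p : ℝ) (((p : ℝ) + 31) / 4)) :
    (q : ℝ) < Real.sqrt p := by
  by_contra! hq
  have hp : (100 : ℝ) ≤ p := by exact_mod_cast (by omega : 100 ≤ p)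
  have hp0 : (0 : ℝ) < p := by linarith
  set n := (p - 5) / 2
  have hn : (p : ℝ) ≤ 2 * n + 6 := by exact_mod_cast (by omega : p ≤ 2 * n + 6)
  have hlog := log_le_log (pow_pos ((sqrt_pos.2 hp0).trans_le hq) n) h
  rw [rpow_eq_pow, rpow_eq_pow, log_rpow_mul_rpow (by positivity) hp0] at hlog
  have hlhs := div_two_mul_log_le_log_pow hp0 hq n
  have hlogp : 0 ≤ log p := log_nonneg (by linarith)
  nlinarith [mul_le_mul_of_nonneg_right hn hlogp, thirtyseven_div_four_mul_log_lt hp]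

theorem q_lt_sqrt_p (p q : ℕ) (hp : p.Prime) (hq : q.Prime)
    (hp200 : 200 < p) (hqo : Odd q) (hq3 : 3 ≤ q)
    (h : (q : ℝ) ^ ((p - 5) / 2) ≤
      Real.rpow (2 * Real.pi) (-(p : ℝ) / 2) * Real.rpow (p : ℝ) (((p : ℝ) + 31) / 4)) :
    (q : ℝ) < Real.sqrt p :=
  q_lt_sqrt_p_general p q hp200 h
end

section
/- Let q be an odd prime, K a number field in which q is unramified, and α, β algebraic integers in K with q dividing α^q - β^q in the ring of integers O_K. Then q^2 divides α^q - β^q in O_K. -/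
/-!
Modulo `q` the Frobenius is additive, so `q ∣ α^q - β^q` gives `q ∣ (α - β)^q`. As `(q)` is
squarefree, it is a radical ideal, hence `q ∣ α - β`; and then `q² ∣ α^q - β^q` because
`α^q - β^q = (α - β) · ∑ αⁱ β^(q-1-i)` where the second factor is `≡ q β^(q-1) ≡ 0 mod q`.
-/

open NumberField

theorem dvd_sub_pow_of_dvd_pow_sub_pow {R : Type*} [CommRing R] {p : ℕ} (hp : p.Prime)
    {a b : R} (h : (p : R) ∣ a ^ p - b ^ p) : (p : R) ∣ (a - b) ^ p := by
  obtain ⟨r, hr⟩ := exists_add_pow_prime_eq hp (a - b) b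
  rw [sub_add_cancel] at hr
  have hexp : (a - b) ^ p = (a ^ p - b ^ p) - p * ((a - b) * b * r) := by
    rw [hr]; ring
  exact hexp ▸ dvd_sub h (dvd_mul_right _ _)

theorem sq_dvd_pow_sub_pow_of_dvd_pow_sub_pow {R : Type*} [CommRing R] {p : ℕ} (hp : p.Prime)
    (hrad : IsRadical (p : R)) {a b : R} (h : (p : R) ∣ a ^ p - b ^ p) :
    (p : R) ^ 2 ∣ a ^ p - b ^ p := by
  simpa using dvd_sub_pow_of_dvd_sub (hrad p _ (dvd_sub_pow_of_dvd_pow_sub_pow hp h)) 1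

theorem isRadical_of_squarefree_span_singleton {R : Type*} [CommRing R] [IsDedekindDomain R]
    {x : R} (hx : Squarefree (Ideal.span {x})) : IsRadical x := by
  intro n y hy
  have hdvd : Ideal.span {x} ∣ Ideal.span {y} ^ n := by
    rwa [Ideal.span_singleton_pow, Ideal.dvd_iff_le, Ideal.span_singleton_le_span_singleton]
  rw [← Ideal.span_singleton_le_span_singleton, ← Ideal.dvd_iff_le]
  exact hx.isRadical n _ hdvd

theorem q_sq_dvd_pow_sub_pow_general (q : ℕ) (hq : q.Prime)
    (K : Type*) [Field K] [NumberField K]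
    (hur : Squarefree (Ideal.span {(q : 𝓞 K)}))
    (α β : 𝓞 K) (h : (q : 𝓞 K) ∣ α ^ q - β ^ q) :
    (q : 𝓞 K) ^ 2 ∣ α ^ q - β ^ q :=
  sq_dvd_pow_sub_pow_of_dvd_pow_sub_pow hq (isRadical_of_squarefree_span_singleton hur) h

/-- If the odd prime `q` is unramified in the number field `K` (i.e. the ideal `(q)` is
squarefree in `𝓞 K`) and `q ∣ α^q - β^q` for algebraic integers `α, β`, then
`q² ∣ α^q - β^q`. -/
theorem q_sq_dvd_pow_sub_pow (q : ℕ) (hq : q.Prime) (hqo : Odd q)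
    (K : Type*) [Field K] [NumberField K]
    (hur : Squarefree (Ideal.span {(q : 𝓞 K)}))
    (α β : 𝓞 K) (h : (q : 𝓞 K) ∣ α ^ q - β ^ q) :
    (q : 𝓞 K) ^ 2 ∣ α ^ q - β ^ q :=
  q_sq_dvd_pow_sub_pow_general q hq K hur α β h
end

section
/- Let p be an odd prime, q a prime different from p, g a primitive root modulo p, and r an integer with 2r + 2 ≤ p - 3. Suppose a_0, ..., a_r are integers such that the algebraic number a_0ζ^{-1} + a_1ζ^{-g} + ... + a_rζ^{-g^r} - a_0ζ - a_1ζ^{g} - ... - a_rζ^{g^r} is divisible by q in Z[ζ], where ζ is a primitive p-th root of unity. Then q divides every a_i. -/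
open NumberField
open scoped nonZeroDivisors

noncomputable abbrev CycField (p : ℕ+) := CyclotomicField p ℚ

instance (p : ℕ+) : NumberField (CycField p) :=
  @IsCyclotomicExtension.numberField {(p : ℕ)} ℚ _ _ _ _ _ _ (CyclotomicField.isCyclotomicExtension _ _)

open Finset

/-!
Multiply the relation by `ζ ^ g ^ k` and take the trace from `ℚ(ζ)` to `ℚ`. Since `Tr ζ ^ m`
is `p - 1` or `-1` according as `p ∣ m` or not, and `g ^ k ± g ^ i` is divisible by `p` only for
`g ^ k - g ^ k` (the powers `g ^ i`, `i ≤ r`, and their negatives are distinct mod `p` because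
`2 r < p - 1 = ord g`), the left side has trace `p * a k`. The right side is `q` times the trace of
an algebraic integer, so `q ∣ p * a k`, and `q ≠ p`.
-/

open Polynomial

theorem Polynomial.nextCoeff_cyclotomic_prime (R : Type*) [CommRing R] [Nontrivial R]
    (p : ℕ) [hp : Fact p.Prime] : (cyclotomic p R).nextCoeff = 1 := by
  have := hp.out.two_le
  rw [nextCoeff, natDegree_cyclotomic, Nat.totient_prime hp.out, if_neg (by omega),
    cyclotomic_prime, finsetSum_coeff, sum_congr rfl fun i _ ↦ coeff_X_pow i _, sum_ite_eq,
    if_pos (mem_range.2 (by omega))]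

theorem pow_add_pow_ne_zero_of_two_mul_lt_orderOf {R : Type*} [CommRing R] [IsDomain R]
    (h2 : (2 : R) ≠ 0) {x : R} {i j : ℕ} (hi : 2 * i < orderOf x) (hj : 2 * j < orderOf x) :
    x ^ i + x ^ j ≠ 0 := by
  intro h
  have hsq : x ^ (2 * i) = x ^ (2 * j) := by
    rw [pow_mul', pow_mul', eq_neg_of_add_eq_zero_left h, neg_sq]
  obtain rfl : i = j := by have := pow_injOn_Iio_orderOf hi hj hsq; omega
  have hx : x ≠ 0 := by
    rintro rfl
    exact zero_ne_one ((zero_pow (by omega)).symm.trans (pow_orderOf_eq_one (0 : R)))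
  rw [← two_mul] at h
  exact pow_ne_zero i hx ((mul_eq_zero.1 h).resolve_left h2)

namespace IsPrimitiveRoot

variable {p : ℕ} [hp : Fact p.Prime] {K L : Type*} [Field K] [Field L] [Algebra K L]
  [IsCyclotomicExtension {p} K L] {ζ : L}

theorem trace_eq_neg_one (hζ : IsPrimitiveRoot ζ p) (hirr : Irreducible (cyclotomic p K)) :
    Algebra.trace K L ζ = -1 := by
  have := IsCyclotomicExtension.neZero' p K L
  rw [← hζ.powerBasis_gen K, PowerBasis.trace_gen_eq_nextCoeff_minpoly, hζ.powerBasis_gen K,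
    ← hζ.minpoly_eq_cyclotomic_of_irreducible hirr, nextCoeff_cyclotomic_prime]

theorem trace_zpow (hζ : IsPrimitiveRoot ζ p) (hirr : Irreducible (cyclotomic p K)) (m : ℤ) :
    Algebra.trace K L (ζ ^ m) = if (m : ZMod p) = 0 then (p : K) - 1 else -1 := by
  split_ifs with hm
  · rw [(hζ.zpow_eq_one_iff_dvd m).2 ((ZMod.intCast_zmod_eq_zero_iff_dvd m p).1 hm),
      ← map_one (algebraMap K L), Algebra.trace_algebraMap, IsCyclotomicExtension.finrank L hirr,
      Nat.totient_prime hp.out, nsmul_eq_mul, mul_one, Nat.cast_pred hp.out.pos]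
  · refine (hζ.zpow_of_gcd_eq_one m ?_).trace_eq_neg_one hirr
    rw [ZMod.intCast_zmod_eq_zero_iff_dvd, Int.natCast_dvd] at hm
    exact Nat.Coprime.symm ((Nat.Prime.coprime_iff_not_dvd hp.out).2 hm)

theorem trace_pow_mul_sum_inv_sub_sum (hζ : IsPrimitiveRoot ζ p)
    (hirr : Irreducible (cyclotomic p K)) {ι : Type*} (s : Finset ι) (c : ι → ℤ) (e : ι → ℕ)
    {k : ι} (hk : k ∈ s) (hinj : ∀ i ∈ s, (e i : ZMod p) = e k → i = k)
    (hneg : ∀ i ∈ s, (e i : ZMod p) + e k ≠ 0) :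
    Algebra.trace K L
        (ζ ^ e k * (∑ i ∈ s, (c i : L) * (ζ ^ e i)⁻¹ - ∑ i ∈ s, (c i : L) * ζ ^ e i)) =
      p * c k := by
  have hζ0 : ζ ≠ 0 := hζ.ne_zero hp.out.ne_zero
  have htrace_mul (n : ℤ) (x : L) : Algebra.trace K L (n * x) = n * Algebra.trace K L x := by
    rw [← zsmul_eq_mul, map_zsmul, zsmul_eq_mul]
  classical
  have hdiff : ∀ i ∈ s, Algebra.trace K L (ζ ^ e k * (ζ ^ e i)⁻¹) =
      (if i = k then (p : K) else 0) - 1 := by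
    intro i hi
    rw [← zpow_natCast, ← zpow_natCast, ← zpow_neg, ← zpow_add₀ hζ0, hζ.trace_zpow hirr]
    have hik : ((e k + -e i : ℤ) : ZMod p) = 0 ↔ i = k := by
      push_cast
      rw [add_neg_eq_zero]
      exact ⟨fun h ↦ hinj i hi h.symm, by rintro rfl; rfl⟩
    simp only [hik, ite_sub, zero_sub]
  have hsum : ∀ i ∈ s, Algebra.trace K L (ζ ^ e k * ζ ^ e i) = -1 := by
    intro i hi
    rw [← pow_add, ← zpow_natCast, hζ.trace_zpow hirr, if_neg]
    push_cast
    rw [add_comm]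
    exact hneg i hi
  simp only [mul_sub, mul_sum, mul_left_comm _ (c _ : L), map_sub, map_sum, htrace_mul]
  rw [sum_congr rfl fun i hi ↦ congrArg _ (hdiff i hi),
    sum_congr rfl fun i hi ↦ congrArg _ (hsum i hi)]
  simp [mul_sub, sum_sub_distrib, mul_ite, sum_ite_eq', hk, mul_comm]

end IsPrimitiveRoot

theorem coeffs_div_of_q_dvd_general (p q g r : ℕ) (hp : p.Prime) (hq : q.Prime)
    (hpq : p ≠ q)
    (hg : orderOf (g : ZMod p) = p - 1) (hr : 2 * r + 2 ≤ p - 3)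
    (ζ : CycField ⟨p, hp.pos⟩) (hζ : IsPrimitiveRoot ζ p)
    (a : Fin (r + 1) → ℤ)
    (h : ∃ γ : 𝓞 (CycField ⟨p, hp.pos⟩),
      (∑ i : Fin (r + 1), (a i : CycField ⟨p, hp.pos⟩) * (ζ ^ (g ^ (i : ℕ)))⁻¹) -
        (∑ i : Fin (r + 1), (a i : CycField ⟨p, hp.pos⟩) * ζ ^ (g ^ (i : ℕ))) =
      (q : CycField ⟨p, hp.pos⟩) * γ) :
    ∀ i, (q : ℤ) ∣ a i := by
  intro k
  obtain ⟨γ, hγ⟩ := h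
  have := Fact.mk hp
  have : IsCyclotomicExtension {p} ℚ (CycField ⟨p, hp.pos⟩) :=
    CyclotomicField.isCyclotomicExtension _ _
  have h2lt (i : Fin (r + 1)) : 2 * (i : ℕ) < orderOf (g : ZMod p) := by omega
  have hlt (i : Fin (r + 1)) : (i : ℕ) < orderOf (g : ZMod p) := by omega
  have hinj (i : Fin (r + 1)) (hik : ((g ^ (i : ℕ) : ℕ) : ZMod p) = (g ^ (k : ℕ) : ℕ)) : i = k :=
    Fin.ext (pow_injOn_Iio_orderOf (hlt i) (hlt k) (by simpa using hik))
  have hneg (i : Fin (r + 1)) : ((g ^ (i : ℕ) : ℕ) : ZMod p) + (g ^ (k : ℕ) : ℕ) ≠ 0 := by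
    have h2 : (2 : ZMod p) ≠ 0 := Ring.two_ne_zero (by rw [ZMod.ringChar_zmod_n]; omega)
    push_cast
    exact pow_add_pow_ne_zero_of_two_mul_lt_orderOf h2 (h2lt i) (h2lt k)
  have htr := hζ.trace_pow_mul_sum_inv_sub_sum (cyclotomic.irreducible_rat hp.pos) univ a
    (fun i ↦ g ^ (i : ℕ)) (mem_univ k) (fun i _ ↦ hinj i) (fun i _ ↦ hneg i)
  have hcoe : ζ ^ g ^ (k : ℕ) * (γ : CycField ⟨p, hp.pos⟩) =
      ((hζ.toInteger ^ g ^ (k : ℕ) * γ : 𝓞 (CycField ⟨p, hp.pos⟩)) : CycField ⟨p, hp.pos⟩) := rfl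
  rw [hγ, mul_left_comm, ← nsmul_eq_mul, map_nsmul, nsmul_eq_mul, hcoe,
    ← Algebra.coe_trace_int] at htr
  have hdvd : (q : ℤ) ∣ p * a k := ⟨_, by exact_mod_cast htr.symm⟩
  have hcop : IsCoprime (q : ℤ) p :=
    Nat.isCoprime_iff_coprime.2 ((Nat.coprime_primes hq hp).2 hpq.symm)
  exact hcop.dvd_of_dvd_mul_left hdvd

/-- If `g` is a primitive root mod `p`, `2r + 2 ≤ p - 3`, and
`∑ aᵢ ζ^{-gⁱ} - ∑ aᵢ ζ^{gⁱ}` is divisible by `q` in `ℤ[ζ]`, then `q` divides every `aᵢ`. -/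
theorem coeffs_div_of_q_dvd (p q g r : ℕ) (hp : p.Prime) (hq : q.Prime)
    (hpo : Odd p) (hpq : p ≠ q)
    (hg : orderOf (g : ZMod p) = p - 1) (hr : 2 * r + 2 ≤ p - 3)
    (ζ : CycField ⟨p, hp.pos⟩) (hζ : IsPrimitiveRoot ζ p)
    (a : Fin (r + 1) → ℤ)
    (h : ∃ γ : 𝓞 (CycField ⟨p, hp.pos⟩),
      (∑ i : Fin (r + 1), (a i : CycField ⟨p, hp.pos⟩) * (ζ ^ (g ^ (i : ℕ)))⁻¹) -
        (∑ i : Fin (r + 1), (a i : CycField ⟨p, hp.pos⟩) * ζ ^ (g ^ (i : ℕ))) =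
      (q : CycField ⟨p, hp.pos⟩) * γ) :
    ∀ i, (q : ℤ) ∣ a i :=
  coeffs_div_of_q_dvd_general p q g r hp hq hpq hg hr ζ hζ a h
end

section
/- If p and q are primes with q > 10^5, q < √p, and p ≤ 2.77 q (log q)(log p - log log q + 2.33)^2, then a contradiction follows; i.e., no such pair (p, q) exists. -/
open Real Finset

-- exp 11.5 < 100001
lemma exp_115_lt : Real.exp 11.5 < 100001 := by
  have h1 : Real.exp 1 < 2.7182818286 := Real.exp_one_lt_d9
  have h2 : Real.exp 11.5 ^ 2 = Real.exp 23 := by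
    rw [← Real.exp_nat_mul]; norm_num
  have h3 : Real.exp 23 = Real.exp 1 ^ 23 := by
    rw [← Real.exp_nat_mul]; norm_num
  have h4 : Real.exp 1 ^ 23 < 2.7182818286 ^ 23 :=
    pow_lt_pow_left₀ h1 (Real.exp_pos 1).le (by norm_num)
  have h5 : (2.7182818286:ℝ) ^ 23 < 100001 ^ 2 := by norm_num
  exact lt_of_pow_lt_pow_left₀ 2 (by norm_num) (by linarith)

-- exp (7/3) < 11.5
lemma exp_73_lt : Real.exp (7/3) < 11.5 := by
  have h1 : Real.exp 1 < 2.7182818286 := Real.exp_one_lt_d9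
  have h2 : Real.exp (7/3) ^ 3 = Real.exp 7 := by
    rw [← Real.exp_nat_mul]; norm_num
  have h3 : Real.exp 7 = Real.exp 1 ^ 7 := by
    rw [← Real.exp_nat_mul]; norm_num
  have h4 : Real.exp 1 ^ 7 < 2.7182818286 ^ 7 :=
    pow_lt_pow_left₀ h1 (Real.exp_pos 1).le (by norm_num)
  have h5 : (2.7182818286:ℝ) ^ 7 < 11.5 ^ 3 := by norm_num
  exact lt_of_pow_lt_pow_left₀ 3 (by norm_num) (by linarith)

-- for y ≥ 11.5, 11.08 y^3 < exp y
lemma key_ineq {y : ℝ} (hy : 11.5 ≤ y) : 11.08 * y ^ 3 < Real.exp y := by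
  have hy0 : (0:ℝ) ≤ y := by linarith
  have hs := Real.sum_le_exp_of_nonneg hy0 9
  have hsum : ∑ i ∈ range 9, y ^ i / i.factorial =
      1 + y + y^2/2 + y^3/6 + y^4/24 + y^5/120 + y^6/720 + y^7/5040 + y^8/40320 := by
    simp [Finset.sum_range_succ, Nat.factorial]
  rw [hsum] at hs
  have h2 : (11.5:ℝ)^2 ≤ y^2 := pow_le_pow_left₀ (by norm_num) hy 2
  have h3 : (11.5:ℝ)^3 ≤ y^3 := pow_le_pow_left₀ (by norm_num) hy 3
  have h4 : (11.5:ℝ)^4 ≤ y^4 := pow_le_pow_left₀ (by norm_num) hy 4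
  have h5 : (11.5:ℝ)^5 ≤ y^5 := pow_le_pow_left₀ (by norm_num) hy 5
  -- y^5/40320 + y^4/5040 + y^3/720 + y^2/120 ≥ 11.673 > 11.08
  have hpoly : 11.08 * y^3 <
      y^3/6 + y^4/24 + y^5/120 + y^6/720 + y^7/5040 + y^8/40320 := by
    nlinarith [mul_le_mul h5 h3 (by positivity) (by positivity),
      mul_le_mul h4 h3 (by positivity) (by positivity),
      mul_le_mul h3 h3 (by positivity) (by positivity),
      mul_le_mul h2 h3 (by positivity) (by positivity), pow_pos (show (0:ℝ)<y by linarith) 3]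
  nlinarith

theorem no_pair_mignotte_roy (p q : ℕ) (hp : p.Prime) (hq : q.Prime)
    (hq5 : 10 ^ 5 < q) (hqp : (q : ℝ) < Real.sqrt p)
    (hMR : (p : ℝ) ≤ 2.77 * q * Real.log q *
      (Real.log p - Real.log (Real.log q) + 2.33) ^ 2) :
    False := by
  have hq1 : (100001 : ℝ) ≤ (q : ℝ) := by exact_mod_cast hq5
  have hq0 : (0:ℝ) < q := by linarith
  have hp0 : (0:ℝ) < p := by exact_mod_cast hp.pos
  set s := Real.sqrt p with hs
  have hs0 : 0 < s := lt_trans hq0 hqp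
  have hps : (p:ℝ) = s * s := (Real.mul_self_sqrt hp0.le).symm
  -- log q > 11.5
  have hlq : 11.5 < Real.log q := by
    rw [← Real.exp_lt_exp]
    calc Real.exp 11.5 < 100001 := exp_115_lt
    _ ≤ (q:ℝ) := hq1
    _ = Real.exp (Real.log q) := (Real.exp_log hq0).symm
  -- log log q > 7/3 > 2.33
  have hllq : (7:ℝ)/3 < Real.log (Real.log q) := by
    rw [← Real.exp_lt_exp]
    calc Real.exp (7/3) < 11.5 := exp_73_lt
    _ < Real.log q := hlq
    _ = Real.exp (Real.log (Real.log q)) := (Real.exp_log (by linarith)).symm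
  -- log q < log p / 2
  have hlogs : Real.log p = 2 * Real.log s := by
    rw [hps, ← sq, Real.log_pow]; push_cast; ring
  have hlqs : Real.log q < Real.log s := Real.log_lt_log hq0 hqp
  have hlp : 23 < Real.log p := by
    have : 11.5 < Real.log s := lt_trans hlq hlqs
    linarith [hlogs]
  -- bound B ≤ log p, B ≥ 0
  have hB1 : Real.log p - Real.log (Real.log q) + 2.33 ≤ Real.log p := by linarith
  have hB0 : 0 ≤ Real.log p - Real.log (Real.log q) + 2.33 := by
    have := Real.log_le_sub_one_of_pos (show (0:ℝ) < Real.log q by linarith)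
    linarith
  have hBsq : (Real.log p - Real.log (Real.log q) + 2.33)^2 ≤ (Real.log p)^2 :=
    pow_le_pow_left₀ hB0 hB1 2
  -- main chain
  have hlq0 : 0 < Real.log q := by linarith
  have hchain : (p:ℝ) ≤ 2.77 * s * Real.log s * (2 * Real.log s)^2 := by
    calc (p:ℝ) ≤ 2.77 * q * Real.log q * (Real.log p - Real.log (Real.log q) + 2.33) ^ 2 := hMR
    _ ≤ 2.77 * q * Real.log q * (Real.log p)^2 := by
        apply mul_le_mul_of_nonneg_left hBsq
        positivity
    _ ≤ 2.77 * s * Real.log s * (Real.log p)^2 := by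
        have : 2.77 * (q:ℝ) * Real.log q ≤ 2.77 * s * Real.log s := by
          nlinarith
        apply mul_le_mul_of_nonneg_right this (by positivity)
    _ = 2.77 * s * Real.log s * (2 * Real.log s)^2 := by rw [hlogs]
  set y := Real.log s with hy
  have hy115 : 11.5 < y := lt_trans hlq hlqs
  have hsy : s = Real.exp y := (Real.exp_log hs0).symm
  have hfinal : s ≤ 11.08 * y^3 := by
    have h := hchain
    rw [hps] at h
    nlinarith [hs0]
  have := key_ineq hy115.le
  rw [← hsy] at this
  linarith
end
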